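/- For every x ∈ (0,∞) there is exactly one integer k ∈ ℤ such that s_k(x) ∈ [1/3, 3); consequently the intervals s_k([1/3,3)), k ∈ ℤ, partition (0,∞). Moreover, for every x ∈ (0,∞) and j ≥ 1: if x ≤ 3 then s_j(x) ≤ 2·6^{−2^{j−1}}, and if x ≥ 1/3 then s_{−j}(x) ≥ (1/2)·6^{2^{j−1}}. -/

import Mathlib

/-- `ω(x) = √(8x+1)`. -/
noncomputable def wF (x : ℝ) : ℝ := Real.sqrt (8 * x + 1)

/-- `s(x) = (ω−1)²/(4(ω+7))`. -/
noncomputable def sF (x : ℝ) : ℝ := (wF x - 1) ^ 2 / (4 * (wF x + 7))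

/-- `s₋₁(x) = 1/s(1/x)`, the inverse of `s`. -/
noncomputable def sFinv (x : ℝ) : ℝ := 1 / sF (1 / x)

/-- The ℤ-indexed iterates of `s`. -/
noncomputable def sIter (k : ℤ) (x : ℝ) : ℝ :=
  if 0 ≤ k then sF^[k.toNat] x else sFinv^[(-k).toNat] x

/-!
The map `s` is an increasing bijection of `(0, ∞)` with `s x < x` and `s x ≤ x ^ 2 / 2`, and
`x ↦ 1 / s x` is an involution, so `s⁻¹ = 1 / s (1 / ·)` and the `s_k` are the powers of one
order automorphism of `(0, ∞)`. Hence `k ↦ s_k x` is decreasing, and since `s 3 = 1 / 3`,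
`s_k x ∈ [1/3, 3)` means exactly `s_k x < 3 ≤ s_{k-1} x`: the decreasing sequence crosses `3`
once. That it crosses at all, and the two bounds, come from iterating the quadratic bound, which
makes the orbit of `3` tend to `0` and to `∞` doubly exponentially.
-/

open Set

lemma OrderIso.coe_pow {α : Type*} [Preorder α] (e : α ≃o α) (n : ℕ) :
    ⇑(e ^ n) = (⇑e)^[n] :=
  hom_coe_pow _ rfl (fun _ _ => rfl) e n

lemma Antitone.existsUnique_lt_le_sub_one {α : Type*} [LinearOrder α] {f : ℤ → α}
    (hf : Antitone f) {c : α} (hlt : ∃ k, f k < c) (hle : ∃ k, c ≤ f k) :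
    ∃! k, f k < c ∧ c ≤ f (k - 1) := by
  obtain ⟨k₀, hk₀⟩ := hlt
  have hbdd : ∀ k, c ≤ f k → k < k₀ := fun k hk =>
    lt_of_not_ge fun h => (hk.trans (hf h)).not_gt hk₀
  obtain ⟨m, hm, hmax⟩ := Int.exists_greatest_of_bdd ⟨k₀, fun k hk => (hbdd k hk).le⟩ hle
  refine ⟨m + 1, ⟨?_, by simpa using hm⟩, ?_⟩
  · exact lt_of_not_ge fun h => (hmax _ h).not_gt (lt_add_one m)
  · rintro k ⟨hk, hk'⟩
    have hk_le : k - 1 ≤ m := hmax _ hk'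
    have hm_lt : m < k := lt_of_not_ge fun h => (hm.trans (hf h)).not_gt hk
    omega

lemma exists_lt_six_pow_two_pow (y : ℝ) : ∃ n : ℕ, y < 6 ^ 2 ^ n := by
  obtain ⟨n, hn⟩ := pow_unbounded_of_one_lt y (by norm_num : (1 : ℝ) < 6)
  exact ⟨n, hn.trans_le (pow_le_pow_right₀ (by norm_num) Nat.lt_two_pow_self.le)⟩

lemma wF_sq {x : ℝ} (hx : 0 ≤ x) : wF x ^ 2 = 8 * x + 1 :=
  Real.sq_sqrt (by linarith)

lemma one_lt_wF {x : ℝ} (hx : 0 < x) : 1 < wF x := by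
  rw [wF, Real.lt_sqrt zero_le_one]
  linarith

lemma sF_pos {x : ℝ} (hx : 0 < x) : 0 < sF x := by
  have := one_lt_wF hx
  unfold sF
  positivity

lemma sF_mapsTo : MapsTo sF (Ioi 0) (Ioi 0) := fun _ hx => sF_pos hx

lemma sF_lt_self {x : ℝ} (hx : 0 < x) : sF x < x := by
  have hω := one_lt_wF hx
  have hω_sq := wF_sq hx.le
  rw [sF, div_lt_iff₀ (by linarith)]
  nlinarith

lemma sF_strictMonoOn : StrictMonoOn sF (Ioi 0) := by
  intro x (hx : 0 < x) y (hy : 0 < y) hxy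
  have hωx := one_lt_wF hx
  have hωy := one_lt_wF hy
  have hω_lt : wF x < wF y := Real.sqrt_lt_sqrt (by linarith) (by linarith)
  rw [sF, sF, div_lt_div_iff₀ (by linarith) (by linarith)]
  -- `(b - 1)² (a + 7) - (a - 1)² (b + 7) = (b - a) (a b + 7 a + 7 b - 15)`
  nlinarith [mul_pos (sub_pos.mpr hω_lt)
    (show (0:ℝ) < wF x * wF y + 7 * wF x + 7 * wF y - 15 by nlinarith)]

lemma sF_le_sq_div_two {x : ℝ} (hx : 0 < x) : sF x ≤ x ^ 2 / 2 := by
  have hω := one_lt_wF hx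
  have hω_sq := wF_sq hx.le
  rw [sF, div_le_div_iff₀ (by linarith) (by norm_num)]
  nlinarith [sq_nonneg (wF x - 1), sq_nonneg ((wF x - 1) * (wF x + 1))]

lemma sF_three : sF 3 = 1 / 3 := by
  have h : wF 3 = 5 := by
    rw [wF, show (8 * 3 + 1 : ℝ) = 5 ^ 2 by norm_num, Real.sqrt_sq (by norm_num)]
  rw [sF, h]
  norm_num

lemma wF_one_div_sF {x : ℝ} (hx : 0 < x) : wF (1 / sF x) = (wF x + 15) / (wF x - 1) := by
  have hω := one_lt_wF hx
  have h8 : 8 * (1 / sF x) + 1 = ((wF x + 15) / (wF x - 1)) ^ 2 := by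
    have : wF x - 1 ≠ 0 := by linarith
    rw [sF]
    field_simp
    ring
  rw [wF, h8, Real.sqrt_sq (div_pos (by linarith) (by linarith)).le]

/-- In terms of `ω` this is the Möbius involution `ω ↦ (ω + 15) / (ω - 1)`. -/
lemma one_div_sF_one_div_sF {x : ℝ} (hx : 0 < x) : 1 / sF (1 / sF x) = x := by
  have hω := one_lt_wF hx
  have hω_sq := wF_sq hx.le
  have : wF x - 1 ≠ 0 := by linarith
  rw [sF, wF_one_div_sF hx]
  field_simp
  linear_combination (1 / 8) * hω_sq

lemma sFinv_pos {x : ℝ} (hx : 0 < x) : 0 < sFinv x :=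
  one_div_pos.mpr (sF_pos (one_div_pos.mpr hx))

lemma sF_sFinv {x : ℝ} (hx : 0 < x) : sF (sFinv x) = x := by
  rw [← one_div_one_div (sF (sFinv x)), sFinv, one_div_sF_one_div_sF (one_div_pos.mpr hx),
    one_div_one_div]

lemma sFinv_sF {x : ℝ} (hx : 0 < x) : sFinv (sF x) = x :=
  one_div_sF_one_div_sF hx

lemma semiconj_inv_sF_sFinv : Function.Semiconj (·⁻¹) sF sFinv := fun x => by
  simp only [sFinv, one_div, inv_inv]

lemma sF_iterate_succ_le {x : ℝ} (hx : 0 < x) (hx3 : x ≤ 3) (n : ℕ) :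
    sF^[n + 1] x ≤ 2 * ((6 : ℝ) ^ 2 ^ n)⁻¹ := by
  induction n with
  | zero =>
    have h := sF_strictMonoOn.monotoneOn hx (mem_Ioi.mpr three_pos) hx3
    rw [sF_three] at h
    norm_num
    linarith
  | succ n ih =>
    have hpos : 0 < sF^[n + 1] x := sF_mapsTo.iterate _ hx
    calc sF^[n + 2] x = sF (sF^[n + 1] x) := Function.iterate_succ_apply' ..
      _ ≤ (sF^[n + 1] x) ^ 2 / 2 := sF_le_sq_div_two hpos
      _ ≤ (2 * ((6 : ℝ) ^ 2 ^ n)⁻¹) ^ 2 / 2 := by gcongr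
      _ = 2 * ((6 : ℝ) ^ 2 ^ (n + 1))⁻¹ := by rw [pow_succ 2 n, pow_mul]; ring

lemma le_sFinv_iterate_succ {x : ℝ} (hx : 1 / 3 ≤ x) (n : ℕ) :
    1 / 2 * (6 : ℝ) ^ 2 ^ n ≤ sFinv^[n + 1] x := by
  have hx0 : 0 < x⁻¹ := by positivity
  have hpos : 0 < sF^[n + 1] x⁻¹ := sF_mapsTo.iterate _ hx0
  have hx3 : x⁻¹ ≤ 3 := by
    rw [inv_le_comm₀ (by linarith) (by norm_num)]
    linarith
  have hdecay := sF_iterate_succ_le hx0 hx3 n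
  rw [← inv_inv x, ← (semiconj_inv_sF_sFinv.iterate_right (n + 1)) x⁻¹]
  calc 1 / 2 * (6 : ℝ) ^ 2 ^ n = (2 * ((6 : ℝ) ^ 2 ^ n)⁻¹)⁻¹ := by field_simp
    _ ≤ (sF^[n + 1] x⁻¹)⁻¹ := inv_anti₀ hpos hdecay

noncomputable def sOrderIso : Ioi (0 : ℝ) ≃o Ioi (0 : ℝ) where
  toFun x := ⟨sF x, sF_pos x.2⟩
  invFun x := ⟨sFinv x, sFinv_pos x.2⟩
  left_inv x := Subtype.ext (sFinv_sF x.2)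
  right_inv x := Subtype.ext (sF_sFinv x.2)
  map_rel_iff' {x y} := sF_strictMonoOn.le_iff_le x.2 y.2

lemma sIter_natCast (n : ℕ) (x : ℝ) : sIter n x = sF^[n] x := by
  simp [sIter]

lemma sIter_neg_natCast (n : ℕ) (x : ℝ) : sIter (-n) x = sFinv^[n] x := by
  rw [sIter]
  split_ifs with h
  · obtain rfl : n = 0 := by omega
    rfl
  · rw [neg_neg, Int.toNat_natCast]

lemma sIter_eq_zpow_apply (k : ℤ) (x : Ioi (0 : ℝ)) :
    sIter k x = ((sOrderIso ^ k) x : ℝ) := by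
  obtain ⟨n, rfl | rfl⟩ := Int.eq_nat_or_neg k
  · have h : Function.Semiconj Subtype.val sOrderIso sF := fun _ => rfl
    rw [sIter_natCast, zpow_natCast, ← (h.iterate_right n) x, OrderIso.coe_pow]
  · have h : Function.Semiconj Subtype.val sOrderIso.symm sFinv := fun _ => rfl
    rw [sIter_neg_natCast, zpow_neg, zpow_natCast, ← inv_pow, ← (h.iterate_right n) x,
      OrderIso.coe_pow]
    rfl

lemma sIter_pos (k : ℤ) {x : ℝ} (hx : 0 < x) : 0 < sIter k x :=
  sIter_eq_zpow_apply k ⟨x, hx⟩ ▸ ((sOrderIso ^ k) ⟨x, hx⟩).2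

lemma sIter_sIter (k m : ℤ) {x : ℝ} (hx : 0 < x) : sIter k (sIter m x) = sIter (k + m) x := by
  rw [sIter_eq_zpow_apply m ⟨x, mem_Ioi.mpr hx⟩, sIter_eq_zpow_apply,
    sIter_eq_zpow_apply _ ⟨x, mem_Ioi.mpr hx⟩, zpow_add, RelIso.mul_apply]

lemma sIter_strictMonoOn (k : ℤ) : StrictMonoOn (sIter k) (Ioi 0) := fun x hx y hy hxy => by
  rw [sIter_eq_zpow_apply k ⟨x, hx⟩, sIter_eq_zpow_apply k ⟨y, hy⟩]
  exact (sOrderIso ^ k).strictMono (Subtype.mk_lt_mk.mpr hxy)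

lemma sIter_eq_sF_sIter_sub_one (k : ℤ) {x : ℝ} (hx : 0 < x) :
    sIter k x = sF (sIter (k - 1) x) := by
  have h := sIter_sIter 1 (k - 1) hx
  rw [add_sub_cancel] at h
  rw [← h]
  simp [sIter]

lemma sIter_antitone {x : ℝ} (hx : 0 < x) : Antitone (sIter · x) :=
  antitone_int_of_succ_le fun k => by
    rw [sIter_eq_sF_sIter_sub_one _ hx, add_sub_cancel_right]
    exact (sF_lt_self (sIter_pos k hx)).le

lemma exists_sIter_lt_three {x : ℝ} (hx : 0 < x) : ∃ k, sIter k x < 3 := by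
  obtain ⟨n, hn⟩ := exists_lt_six_pow_two_pow (2 * x)
  have hgrowth : x < sIter (-(n + 1 : ℕ)) 3 := by
    rw [sIter_neg_natCast]
    linarith [le_sFinv_iterate_succ (by norm_num : (1 / 3 : ℝ) ≤ 3) n]
  refine ⟨(n + 1 : ℕ), ?_⟩
  have := sIter_strictMonoOn (n + 1 : ℕ) hx (sIter_pos _ three_pos) hgrowth
  rwa [sIter_sIter _ _ three_pos, add_neg_cancel] at this

lemma exists_three_le_sIter {x : ℝ} (hx : 0 < x) : ∃ k, 3 ≤ sIter k x := by
  obtain ⟨n, hn⟩ := exists_lt_six_pow_two_pow (2 / x)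
  have hdecay : sIter (n + 1 : ℕ) 3 ≤ x := by
    rw [sIter_natCast]
    refine (sF_iterate_succ_le three_pos le_rfl n).trans ?_
    rw [div_lt_iff₀ hx] at hn
    rw [← div_eq_mul_inv, div_le_iff₀ (by positivity)]
    linarith
  refine ⟨-(n + 1 : ℕ), ?_⟩
  have := (sIter_strictMonoOn (-(n + 1 : ℕ))).monotoneOn (sIter_pos _ three_pos) hx hdecay
  rwa [sIter_sIter _ _ three_pos, neg_add_cancel] at this

lemma sIter_mem_Ico_iff (k : ℤ) {x : ℝ} (hx : 0 < x) :
    sIter k x ∈ Ico (1 / 3 : ℝ) 3 ↔ sIter k x < 3 ∧ 3 ≤ sIter (k - 1) x := by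
  rw [mem_Ico, and_comm, ← sF_three, sIter_eq_sF_sIter_sub_one k hx,
    sF_strictMonoOn.le_iff_le (mem_Ioi.mpr three_pos) (sIter_pos _ hx)]

/-- For every `x > 0` there is a unique `k ∈ ℤ` with `s_k(x) ∈ [1/3,3)` (so the sets
`s_k([1/3,3))` partition `(0,∞)`); moreover for `j ≥ 1`: `s_j(x) ≤ 2·6^{−2^{j−1}}`
whenever `0 < x ≤ 3`, and `s_{−j}(x) ≥ (1/2)·6^{2^{j−1}}` whenever `x ≥ 1/3`. -/
theorem sIter_partition_and_decay :
    (∀ x : ℝ, 0 < x → ∃! k : ℤ, sIter k x ∈ Set.Ico (1 / 3 : ℝ) 3) ∧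
    (∀ x : ℝ, 0 < x → x ≤ 3 → ∀ j : ℕ, 1 ≤ j →
      sIter (j : ℤ) x ≤ 2 * ((6 : ℝ) ^ 2 ^ (j - 1))⁻¹) ∧
    (∀ x : ℝ, 1 / 3 ≤ x → ∀ j : ℕ, 1 ≤ j →
      (1 / 2 : ℝ) * 6 ^ 2 ^ (j - 1) ≤ sIter (-(j : ℤ)) x) := by
  refine ⟨fun x hx => ?_, fun x hx hx3 j hj => ?_, fun x hx j hj => ?_⟩
  · simp_rw [sIter_mem_Ico_iff _ hx]
    exact (sIter_antitone hx).existsUnique_lt_le_sub_one (exists_sIter_lt_three hx)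
      (exists_three_le_sIter hx)
  · obtain ⟨n, rfl⟩ := Nat.exists_eq_add_of_le' hj
    rw [sIter_natCast, Nat.add_sub_cancel]
    exact sF_iterate_succ_le hx hx3 n
  · obtain ⟨n, rfl⟩ := Nat.exists_eq_add_of_le' hj
    rw [sIter_neg_natCast, Nat.add_sub_cancel]
    exact le_sFinv_iterate_succ hx n
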